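/- arXiv:hep-th/0401089 — 2 statements merged into one kernel-verified Lean document; each statement's English description precedes it below -/
import Mathlib

section
/- For each α ∈ {1,…,2n}, ∏_{β≠α}(x − μ_β) = Σ_{l=0}^{2n−1} Σ_{s=0}^{l} x^{2n−l−1} μ_α^{l−s} (−1)^s Sym_s, where Sym_s is the s-th elementary symmetric polynomial of all μ₁,…,μ_{2n}. -/
open Finset Polynomial

/-- The `k`-th elementary symmetric polynomial of the family `f` over the index set `s`. -/
noncomputable def esymmOf {R : Type} [CommRing R] {ι : Type} [DecidableEq ι]
    (s : Finset ι) (f : ι → R) (k : ℕ) : R :=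
  ∑ t ∈ s.powersetCard k, ∏ i ∈ t, f i

/-- The `r`-th complete homogeneous symmetric polynomial of the family `f` over `s`. -/
noncomputable def hsymmOf {R : Type} [CommRing R] {ι : Type} [DecidableEq ι]
    (s : Finset ι) (f : ι → R) (r : ℕ) : R :=
  ∑ m ∈ s.sym r, (((m : Sym ι r) : Multiset ι).map f).prod

/-- `∏_{β≠α}(x − μ_β) = Σ_{l=0}^{2n−1} Σ_{s=0}^{l} x^{2n−l−1} μ_α^{l−s} (−1)^s Sym_s`. -/
theorem stmt4 {R : Type} [CommRing R] (n : ℕ) (μ : Fin (2 * n) → R) (α : Fin (2 * n)) :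
    ∏ β ∈ Finset.univ.erase α, ((X : R[X]) - C (μ β))
      = ∑ l ∈ Finset.range (2 * n), ∑ s ∈ Finset.range (l + 1),
          (X : R[X]) ^ (2 * n - l - 1)
            * C (μ α ^ (l - s) * (-1) ^ s * esymmOf Finset.univ μ s) := by
  classical
  have hN : ∀ x : ℕ, x = x := fun _ => rfl
  let N := 2 * n
  let e : ℕ → R := fun s => esymmOf Finset.univ μ s
  have he : ∀ s, e s = esymmOf Finset.univ μ s := fun _ => rfl
  -- Vieta
  have hvieta : ∏ i ∈ Finset.univ, ((X:R[X]) - C (μ i)) =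
      ∑ j ∈ Finset.range (N+1), C ((-1)^j * e j) * X^(N-j) := by
    have h := Multiset.prod_X_sub_X_eq_sum_esymm ((Finset.univ.val.map μ) : Multiset R)
    rw [Multiset.map_map] at h
    have hcard : Multiset.card (Finset.univ.val.map μ) = N := by simp [N]
    rw [hcard] at h
    have h2 : ∏ i ∈ Finset.univ, ((X:R[X]) - C (μ i))
        = (Multiset.map ((fun t => X - C t) ∘ μ) Finset.univ.val).prod := rfl
    rw [h2, h]
    refine Finset.sum_congr rfl fun j _ => ?_
    rw [Finset.esymm_map_val]
    show (-1:R[X])^j * (C (esymmOf Finset.univ μ j) * X^(N-j)) = _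
    rw [he j, map_mul, map_pow, map_neg, map_one]
    ring
  -- root identity
  have hroot : ∑ j ∈ Finset.range (N+1), (-1)^j * e j * μ α ^ (N - j) = 0 := by
    have h0 : Polynomial.eval (μ α) (∏ i ∈ Finset.univ, ((X:R[X]) - C (μ i))) = 0 := by
      rw [eval_prod]
      exact Finset.prod_eq_zero (Finset.mem_univ α) (by simp)
    rw [hvieta] at h0
    simpa [eval_finset_sum, mul_assoc] using h0
  have hroot' : ∑ j ∈ Finset.range N, (-1)^j * e j * μ α ^ (N - j) = -((-1)^N * e N) := by
    have h := hroot
    rw [Finset.sum_range_succ] at h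
    simp only [Nat.sub_self, pow_zero, mul_one] at h
    exact eq_neg_of_add_eq_zero_left h
  have hmonic : ((X:R[X]) - C (μ α)).Monic := monic_X_sub_C _
  apply hmonic.isRegular.left
  show ((X:R[X]) - C (μ α)) * _ = ((X:R[X]) - C (μ α)) * _
  rw [Finset.mul_prod_erase Finset.univ (fun β => (X:R[X]) - C (μ β)) (Finset.mem_univ α), hvieta]
  -- swap the double sum on the RHS
  have hswap : (∑ l ∈ Finset.range N, ∑ s ∈ Finset.range (l + 1),
        (X : R[X]) ^ (N - l - 1) * C (μ α ^ (l - s) * (-1) ^ s * e s))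
      = ∑ s ∈ Finset.range N, ∑ l ∈ Finset.Ico s N,
        (X : R[X]) ^ (N - l - 1) * C (μ α ^ (l - s) * (-1) ^ s * e s) := by
    have h := (Finset.sum_Ico_Ico_comm 0 N
      (fun s l => (X : R[X]) ^ (N - l - 1) * C (μ α ^ (l - s) * (-1) ^ s * e s))).symm
    simp only [← Finset.range_eq_Ico] at h
    exact h
  rw [hswap, Finset.mul_sum]
  -- inner geometric sums
  have hinner : ∀ s ∈ Finset.range N,
      ((X:R[X]) - C (μ α)) * ∑ l ∈ Finset.Ico s N,
          (X : R[X]) ^ (N - l - 1) * C (μ α ^ (l - s) * (-1) ^ s * e s)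
      = C ((-1)^s * e s) * (X^(N-s) - C (μ α ^ (N-s))) := by
    intro s hs
    rw [Finset.mem_range] at hs
    have hre : (∑ l ∈ Finset.Ico s N,
          (X : R[X]) ^ (N - l - 1) * C (μ α ^ (l - s) * (-1) ^ s * e s))
        = C ((-1)^s * e s) *
          ∑ i ∈ Finset.range (N - s), (C (μ α))^i * X ^ ((N - s) - 1 - i) := by
      rw [Finset.mul_sum, Finset.sum_Ico_eq_sum_range]
      refine Finset.sum_congr rfl fun i hi => ?_
      rw [Finset.mem_range] at hi
      have h1 : N - (s + i) - 1 = N - s - 1 - i := by omega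
      have h2 : s + i - s = i := by omega
      rw [h1, h2]
      simp only [map_mul, map_pow, map_neg, map_one]
      ring
    rw [hre, ← mul_assoc, mul_comm ((X:R[X]) - C (μ α)), mul_assoc]
    congr 1
    have := geom_sum₂_mul (C (μ α)) (X : R[X]) (N - s)
    have h3 : (∑ i ∈ Finset.range (N-s), (C (μ α))^i * X ^ ((N-s) - 1 - i)) * ((X:R[X]) - C (μ α))
        = X^(N-s) - C (μ α ^ (N-s)) := by
      have := geom_sum₂_mul (C (μ α)) (X : R[X]) (N - s)
      calc (∑ i ∈ Finset.range (N-s), (C (μ α))^i * X ^ ((N-s) - 1 - i)) * ((X:R[X]) - C (μ α))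
          = -((∑ i ∈ Finset.range (N-s), (C (μ α))^i * X ^ ((N-s) - 1 - i)) * ((C (μ α)) - X)) := by ring
        _ = -((C (μ α))^(N-s) - X^(N-s)) := by rw [this]
        _ = X^(N-s) - C (μ α ^ (N-s)) := by rw [map_pow]; ring
    rw [mul_comm]
    exact h3
  rw [Finset.sum_congr rfl hinner]
  -- finish
  have hsplit : ∑ s ∈ Finset.range N, C ((-1)^s * e s) * ((X:R[X])^(N-s) - C (μ α ^ (N-s)))
      = (∑ s ∈ Finset.range N, C ((-1)^s * e s) * X^(N-s))
        - C (∑ s ∈ Finset.range N, (-1)^s * e s * μ α ^ (N-s)) := by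
    rw [map_sum, ← Finset.sum_sub_distrib]
    refine Finset.sum_congr rfl fun s _ => ?_
    simp only [map_mul, map_pow, map_neg, map_one, map_sub]
    ring
  rw [hsplit, hroot', Finset.sum_range_succ]
  simp only [Nat.sub_self, pow_zero, mul_one, map_neg, sub_neg_eq_add]
end

section
/- For variables μ₁,…,μ_N in a commutative ring, e_1 · e_s = (s+1)·e_{s+1} + Σ_{α=1}^{N} μ_α² · e(¬μ_α)_{s−1}, where e_k is the k-th elementary symmetric polynomial of all variables and e(¬μ_α)_k that of the variables with μ_α omitted. -/
open Finset Polynomial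

/-- `e_1 · e_s = (s+1)·e_{s+1} + Σ_{α=1}^{N} μ_α² · e(¬μ_α)_{s−1}`, with the
convention `e(¬μ_α)_{−1} = 0`. -/
theorem stmt10 {R : Type} [CommRing R] (N : ℕ) (μ : Fin N → R) (s : ℕ) :
    esymmOf Finset.univ μ 1 * esymmOf Finset.univ μ s
      = ((s : R) + 1) * esymmOf Finset.univ μ (s + 1)
        + ∑ α : Fin N, μ α ^ 2 *
            (if s = 0 then 0 else esymmOf (Finset.univ.erase α) μ (s - 1)) := by
  classical
  have e1 : esymmOf (Finset.univ : Finset (Fin N)) μ 1 = ∑ α : Fin N, μ α := by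
    simp [esymmOf, powersetCard_one, sum_map]
  rw [e1, sum_mul]
  have key : ∀ α : Fin N,
      μ α * esymmOf Finset.univ μ s
        = μ α ^ 2 * (if s = 0 then 0 else esymmOf (Finset.univ.erase α) μ (s - 1))
          + ∑ T ∈ (Finset.univ.powersetCard (s+1)).filter (fun T => α ∈ T), ∏ i ∈ T, μ i := by
    intro α
    rw [esymmOf, mul_sum,
      ← sum_filter_add_sum_filter_not (Finset.univ.powersetCard s) (fun T => α ∈ T)]
    congr 1
    · -- α ∈ T part
      rcases Nat.eq_zero_or_pos s with hs | hs
      · subst hs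
        simp [Finset.filter_singleton]
      · rw [if_neg (Nat.pos_iff_ne_zero.mp hs), esymmOf, mul_sum]
        refine Finset.sum_nbij' (fun T => T.erase α) (fun T => insert α T) ?_ ?_ ?_ ?_ ?_
        · intro T hT
          simp only [mem_filter, mem_powersetCard_univ] at hT
          rw [mem_powersetCard]
          refine ⟨fun x hx => mem_erase.mpr ⟨(mem_erase.mp hx).1, mem_univ x⟩, ?_⟩
          rw [card_erase_of_mem hT.2, hT.1]
        · intro T hT
          rw [mem_powersetCard] at hT
          simp only [mem_filter, mem_powersetCard_univ]
          have hα : α ∉ T := fun h => (notMem_erase α Finset.univ) (hT.1 h)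
          exact ⟨by rw [card_insert_of_notMem hα, hT.2, Nat.sub_add_cancel hs],
            mem_insert_self _ _⟩
        · intro T hT
          simp only [mem_filter] at hT
          exact insert_erase hT.2
        · intro T hT
          rw [mem_powersetCard] at hT
          exact erase_insert fun h => (notMem_erase α Finset.univ) (hT.1 h)
        · intro T hT
          simp only [mem_filter] at hT
          have hp := Finset.prod_insert (f := μ) (notMem_erase α T)
          rw [insert_erase hT.2] at hp
          rw [hp, pow_two, mul_assoc]
    · -- α ∉ T part, map via insert α
      refine Finset.sum_nbij' (fun T => insert α T) (fun T => T.erase α) ?_ ?_ ?_ ?_ ?_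
      · intro T hT
        simp only [mem_filter, mem_powersetCard_univ] at hT ⊢
        exact ⟨by rw [card_insert_of_notMem hT.2, hT.1], mem_insert_self _ _⟩
      · intro T hT
        simp only [mem_filter, mem_powersetCard_univ] at hT ⊢
        refine ⟨?_, notMem_erase α T⟩
        rw [card_erase_of_mem hT.2, hT.1, Nat.add_sub_cancel]
      · intro T hT
        simp only [mem_filter] at hT
        exact erase_insert hT.2
      · intro T hT
        simp only [mem_filter] at hT
        exact insert_erase hT.2
      · intro T hT
        simp only [mem_filter] at hT
        rw [Finset.prod_insert hT.2]
  rw [Finset.sum_congr rfl fun α _ => key α, Finset.sum_add_distrib, add_comm]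
  congr 1
  rw [Finset.sum_congr rfl fun (α : Fin N) _ =>
    Finset.sum_filter (fun T => α ∈ T) (fun T => ∏ i ∈ T, μ i), Finset.sum_comm,
    esymmOf, mul_sum]
  refine Finset.sum_congr rfl fun T hT => ?_
  rw [mem_powersetCard_univ] at hT
  rw [← Finset.sum_filter]
  have hfil : Finset.univ.filter (fun α : Fin N => α ∈ T) = T := by ext x; simp
  rw [hfil, Finset.sum_const, hT, nsmul_eq_mul]
  push_cast
  ring
end
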